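/- Let $(S,\mathcal{S})$ be a measurable space and $\{X_n\}_{n\geq 0}$ a Markov chain on $S$. Suppose there exists a measurable function $V: S \to [0,\infty)$ and constants $0<c<1$, $b>0$ such that $E(V(X_1)\mid X_0=x) \le cV(x)+b$ for all $x\in S$. For $l>0$ let $C_l = \{y\in S: V(y)\le l\}$ and let $\tau_{C_l} = \inf\{n\geq 1: X_n\in C_l\}$. Then for every $x\notin C_l$ and every $n\geq 0$, $P_x(\tau_{C_l}>n) \le \frac{V(x)}{l}\left(c+\frac{b}{l}\right)^n$. -/
import Mathlib


open MeasureTheory ProbabilityTheory ENNReal NNReal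

/-- `survivalProb κ C n x = P_x(τ_C > n)`: the probability that the Markov chain with
transition kernel `κ` started at `x` avoids `C` at all times `1, …, n`. -/
noncomputable def survivalProb {S : Type*} [MeasurableSpace S]
    (κ : Kernel S S) (C : Set S) : ℕ → S → ℝ≥0∞
  | 0 => fun _ => 1
  | (n + 1) => fun x => ∫⁻ y in Cᶜ, survivalProb κ C n y ∂(κ x)

/-- for a Markov chain satisfying the Foster–Lyapunov drift condition
`E(V(X₁) ∣ X₀ = x) ≤ c V(x) + b` with `0 < c < 1`, `b > 0`, the first hitting time of
`C_l = {V ≤ l}` satisfies `P_x(τ_{C_l} > n) ≤ (V(x)/l) (c + b/l)ⁿ` for `x ∉ C_l`. -/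
theorem stmt_0 {S : Type*} [MeasurableSpace S] (κ : Kernel S S) [IsMarkovKernel κ]
    (V : S → ℝ≥0) (hVmeas : Measurable V) (c b : ℝ≥0)
    (hc0 : 0 < c) (hc1 : c < 1) (hb : 0 < b)
    (hdrift : ∀ x : S, ∫⁻ y, (V y : ℝ≥0∞) ∂(κ x) ≤ c * V x + b)
    (l : ℝ≥0) (hl : 0 < l) (x : S) (hx : x ∉ {y : S | V y ≤ l}) (n : ℕ) :
    survivalProb κ {y : S | V y ≤ l} n x
      ≤ ((V x : ℝ≥0∞) / l) * ((c : ℝ≥0∞) + (b : ℝ≥0∞) / l) ^ n := by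
  have hl' : (l : ℝ≥0∞) ≠ 0 := by exact_mod_cast hl.ne'
  have hltop : (l : ℝ≥0∞) ≠ ⊤ := ENNReal.coe_ne_top
  set ρ : ℝ≥0∞ := (c : ℝ≥0∞) + (b : ℝ≥0∞) / l with hρ
  have key : ∀ n : ℕ, ∀ x : S, (l : ℝ≥0∞) < V x →
      survivalProb κ {y : S | V y ≤ l} n x ≤ ((V x : ℝ≥0∞) / l) * ρ ^ n := by
    intro n
    induction n with
    | zero =>
      intro x hx
      simp only [survivalProb, pow_zero, mul_one]
      rw [ENNReal.le_div_iff_mul_le (Or.inl hl') (Or.inl hltop), one_mul]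
      exact hx.le
    | succ n ih =>
      intro x hx
      have hmeas : Measurable fun y : S => ((V y : ℝ≥0∞) / l) * ρ ^ n := by
        exact ((hVmeas.coe_nnreal_ennreal).div_const _).mul_const _
      have h1 : survivalProb κ {y : S | V y ≤ l} (n+1) x
          ≤ ∫⁻ y in {y : S | V y ≤ l}ᶜ, ((V y : ℝ≥0∞) / l) * ρ ^ n ∂(κ x) := by
        refine setLIntegral_mono hmeas ?_
        intro y hy
        exact ih y (by simpa [not_le] using hy)
      have h2 : ∫⁻ y in {y : S | V y ≤ l}ᶜ, ((V y : ℝ≥0∞) / l) * ρ ^ n ∂(κ x)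
          ≤ ∫⁻ y, ((V y : ℝ≥0∞) / l) * ρ ^ n ∂(κ x) :=
        setLIntegral_le_lintegral _ _
      have h3 : ∫⁻ y, ((V y : ℝ≥0∞) / l) * ρ ^ n ∂(κ x)
          = (∫⁻ y, (V y : ℝ≥0∞) ∂(κ x)) * (ρ ^ n / l) := by
        rw [← lintegral_mul_const _ hVmeas.coe_nnreal_ennreal]
        congr 1
        funext y
        simp only [div_eq_mul_inv]
        ring
      have h4 : (∫⁻ y, (V y : ℝ≥0∞) ∂(κ x)) * (ρ ^ n / l)
          ≤ ((c : ℝ≥0∞) * V x + b) * (ρ ^ n / l) := by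
        gcongr
        exact_mod_cast hdrift x
      have h5 : ((c : ℝ≥0∞) * V x + b) * (ρ ^ n / l)
          ≤ ((V x : ℝ≥0∞) / l) * ρ ^ (n+1) := by
        have hb' : (b : ℝ≥0∞) ≤ (V x : ℝ≥0∞) * b / l := by
          rw [ENNReal.le_div_iff_mul_le (Or.inl hl') (Or.inl hltop)]
          calc (b : ℝ≥0∞) * l ≤ (b : ℝ≥0∞) * V x := by gcongr
            _ = (V x : ℝ≥0∞) * b := mul_comm _ _
        have hcore : (c : ℝ≥0∞) * V x + b ≤ (V x : ℝ≥0∞) * ρ := by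
          rw [hρ, mul_add, ← mul_div_assoc]
          exact add_le_add (le_of_eq (mul_comm _ _)) hb'
        calc ((c : ℝ≥0∞) * V x + b) * (ρ ^ n / l)
            ≤ ((V x : ℝ≥0∞) * ρ) * (ρ ^ n / l) := by gcongr
          _ = ((V x : ℝ≥0∞) / l) * ρ ^ (n+1) := by
              simp only [pow_succ, div_eq_mul_inv]
              ring
      exact le_trans h1 (le_trans h2 (le_trans (le_of_eq h3) (le_trans h4 h5)))
  exact key n x (by simpa [not_le] using hx)
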